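/- Let c, σ > 0, let v : [0, 1] → ℝ be twice continuously differentiable with v(0) = v(1) = 0, let φ : [0, 1] → ℝ be continuously differentiable with φ(0) = φ(1) = 0, let θ₁, δ : [0, 1] → ℝ be continuous, let y ∈ ℝ, and let K : [0, 1] → ℝ be continuous with |K(x)| ≤ |y| for all x ∈ [0, 1]. Set F(x) := c²·v''(x) − σ·φ(x) + θ₁(x)K(x) + δ(x) and D := (2(c² + 1)/σ)·∫₀¹ v'(x)φ'(x) dx + (2/σ)·∫₀¹ φ(x)F(x) dx + (2/(σc²))·∫₀¹ (φ(x) + σv(x))·(F(x) + σφ(x)) dx. Then D ≤ −( ∫₀¹ (v'(x))² dx + ∫₀¹ φ(x)² dx ) + 2·((c² + 1)²π² + σ²)/(σ²c⁴π²)·( (∫₀¹ θ₁(x)² dx)·y² + ∫₀¹ δ(x)² dx ). -/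

import Mathlib

/-!
Integrating by parts (the boundary terms vanish since `v` and `φ` do), and writing
`G = θ₁ K + δ`, one finds `D = -2∫v'² - 2∫φ² + (2(c² + 1)/(σc²))∫φG + (2/c²)∫vG`.
Young's inequality absorbs the two cross terms into `∫φ²` and `π²∫v²` at the cost of a multiple
of `∫G²`, Wirtinger's inequality `π²∫v² ≤ ∫v'²` absorbs the latter, and
`∫G² ≤ 2(y²∫θ₁² + ∫δ²)` because `|K| ≤ |y|`.
-/

open Real Set Filter Topology

theorem sin_pi_mul_nonneg {x : ℝ} (hx : x ∈ Icc (0 : ℝ) 1) : 0 ≤ sin (π * x) :=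
  sin_nonneg_of_nonneg_of_le_pi (by nlinarith [hx.1, pi_pos]) (by nlinarith [hx.2, pi_pos])

theorem sin_pi_mul_pos {x : ℝ} (hx : x ∈ Ioo (0 : ℝ) 1) : 0 < sin (π * x) :=
  sin_pos_of_pos_of_lt_pi (by nlinarith [hx.1, pi_pos]) (by nlinarith [hx.2, pi_pos])

theorem two_mul_min_le_sin_pi_mul {x : ℝ} (hx : x ∈ Icc (0 : ℝ) 1) :
    2 * min x (1 - x) ≤ sin (π * x) := by
  have hπ := pi_pos
  rcases le_total x (1 / 2) with h | h
  · calc 2 * min x (1 - x) ≤ 2 / π * (π * x) := by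
          rw [show 2 / π * (π * x) = 2 * x by field_simp]; gcongr; exact min_le_left _ _
      _ ≤ sin (π * x) := mul_le_sin (by nlinarith [hx.1]) (by nlinarith)
  · calc 2 * min x (1 - x) ≤ 2 / π * (π * (1 - x)) := by
          rw [show 2 / π * (π * (1 - x)) = 2 * (1 - x) by field_simp]; gcongr
          exact min_le_right _ _
      _ ≤ sin (π * (1 - x)) := mul_le_sin (by nlinarith [hx.2]) (by nlinarith)
      _ = sin (π * x) := by rw [mul_one_sub, sin_pi_sub]

theorem two_mul_abs_le_mul_sin_pi_mul {v : ℝ → ℝ} {M x : ℝ} (hv : Differentiable ℝ v)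
    (hM : ∀ t ∈ Icc (0 : ℝ) 1, |deriv v t| ≤ M) (hv0 : v 0 = 0) (hv1 : v 1 = 0)
    (hx : x ∈ Icc (0 : ℝ) 1) : 2 * |v x| ≤ M * sin (π * x) := by
  have hM0 : 0 ≤ M := (abs_nonneg _).trans (hM 0 (left_mem_Icc.2 zero_le_one))
  have lip : ∀ s ∈ Icc (0 : ℝ) 1, ∀ t ∈ Icc (0 : ℝ) 1, |v t - v s| ≤ M * |t - s| :=
    fun s hs t ht =>
      (convex_Icc 0 1).norm_image_sub_le_of_norm_deriv_le (fun z _ => hv z) hM hs ht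
  have h0 := lip 0 (left_mem_Icc.2 zero_le_one) x hx
  have h1 := lip x hx 1 (right_mem_Icc.2 zero_le_one)
  rw [hv0, sub_zero, sub_zero, abs_of_nonneg hx.1] at h0
  rw [hv1, zero_sub, abs_neg, abs_of_nonneg (sub_nonneg.2 hx.2)] at h1
  calc 2 * |v x| ≤ 2 * (M * min x (1 - x)) := by
        rw [mul_min_of_nonneg _ _ hM0]; gcongr; exact le_min h0 h1
    _ = M * (2 * min x (1 - x)) := by ring
    _ ≤ M * sin (π * x) := by gcongr; exact two_mul_min_le_sin_pi_mul hx

theorem hasDerivAt_sq_mul_cot_pi_mul {v : ℝ → ℝ} {x : ℝ} (hv : DifferentiableAt ℝ v x)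
    (hx : sin (π * x) ≠ 0) :
    HasDerivAt (fun t => v t ^ 2 * cot (π * t))
      (2 * v x * deriv v x * cot (π * x) - π * v x ^ 2 / sin (π * x) ^ 2) x := by
  have hcot : HasDerivAt (fun t => cot (π * t)) (-π / sin (π * x) ^ 2) x := by
    have hlin : HasDerivAt (fun t => π * t) π x := by
      simpa using (hasDerivAt_id x).const_mul π
    simp only [cot_eq_cos_div_sin]
    refine (hlin.cos.fun_div hlin.sin hx).congr_deriv ?_
    congr 1
    linear_combination (-π) * sin_sq_add_cos_sq (π * x)
  refine ((hv.hasDerivAt.fun_pow 2).fun_mul hcot).congr_deriv ?_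
  norm_num
  ring

theorem continuousOn_sq_mul_cot_pi_mul {v : ℝ → ℝ} (hv : ContDiff ℝ 1 v) (hv0 : v 0 = 0)
    (hv1 : v 1 = 0) : ContinuousOn (fun t => v t ^ 2 * cot (π * t)) (Icc 0 1) := by
  have hvc := hv.continuous
  obtain ⟨M, hM⟩ := isCompact_Icc.exists_bound_of_continuousOn
    (hv.continuous_deriv le_rfl).continuousOn
  have hvM := fun t (ht : t ∈ Icc (0 : ℝ) 1) =>
    two_mul_abs_le_mul_sin_pi_mul (hv.differentiable one_ne_zero) hM hv0 hv1 ht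
  have hM0 : 0 ≤ M := (norm_nonneg _).trans (hM 0 (left_mem_Icc.2 zero_le_one))
  have hbound : ∀ t ∈ Icc (0 : ℝ) 1, ‖v t ^ 2 * cot (π * t)‖ ≤ M * |v t| := by
    intro t ht
    rcases (sin_pi_mul_nonneg ht).eq_or_lt with hs | hs
    · -- `cot (π t) = cos (π t) / 0 = 0` here
      rw [cot_eq_cos_div_sin, ← hs, div_zero, mul_zero, norm_zero]
      exact mul_nonneg hM0 (abs_nonneg _)
    have hcot : |v t| * |cot (π * t)| ≤ M := by
      rw [cot_eq_cos_div_sin, abs_div, abs_of_pos hs, ← mul_div_assoc, div_le_iff₀ hs]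
      nlinarith [abs_cos_le_one (π * t), abs_nonneg (v t), abs_nonneg (cos (π * t)), hvM t ht]
    rw [norm_mul, norm_pow, Real.norm_eq_abs, Real.norm_eq_abs, sq, mul_assoc, mul_comm M]
    exact mul_le_mul_of_nonneg_left hcot (abs_nonneg _)
  intro t ht
  by_cases hs : sin (π * t) = 0
  · have hvt : v t = 0 := by
      have := hvM t ht
      rw [hs, mul_zero] at this
      exact abs_nonpos_iff.1 (by linarith)
    have hlim : Tendsto (fun s => M * |v s|) (𝓝[Icc 0 1] t) (𝓝 0) := by
      have : Continuous fun s => M * |v s| := by fun_prop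
      exact (this.tendsto' t 0 (by simp [hvt])).mono_left nhdsWithin_le_nhds
    simpa [ContinuousWithinAt, hvt] using
      squeeze_zero_norm' (eventually_nhdsWithin_of_forall hbound) hlim
  · exact (hasDerivAt_sq_mul_cot_pi_mul (hv.differentiable one_ne_zero t) hs).continuousAt
      |>.continuousWithinAt

/-- Wirtinger's inequality. With `g = π v² cot (π x)`, which is continuous on `[0, 1]` and
vanishes at both ends because `|v x| ≤ (sup |v'|) sin (π x)`, one has
`v'² - π² v² - g' = (v' - π v cot (π x))² ≥ 0` on `(0, 1)`; only this upper bound on `g'` enters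
the fundamental theorem of calculus, so `g'` need not be integrable. -/
theorem pi_sq_mul_integral_sq_le_integral_deriv_sq {v : ℝ → ℝ} (hv : ContDiff ℝ 1 v)
    (hv0 : v 0 = 0) (hv1 : v 1 = 0) :
    π ^ 2 * ∫ x in (0 : ℝ)..1, v x ^ 2 ≤ ∫ x in (0 : ℝ)..1, deriv v x ^ 2 := by
  have hvc := hv.continuous
  have hv'c := hv.continuous_deriv le_rfl
  have hderiv_le : ∀ x ∈ Ioo (0 : ℝ) 1,
      π * (2 * v x * deriv v x * cot (π * x) - π * v x ^ 2 / sin (π * x) ^ 2) ≤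
        deriv v x ^ 2 - π ^ 2 * v x ^ 2 := by
    intro x hx
    have hs := (sin_pi_mul_pos hx).ne'
    have hsq : deriv v x ^ 2 - π ^ 2 * v x ^ 2 -
        π * (2 * v x * deriv v x * cot (π * x) - π * v x ^ 2 / sin (π * x) ^ 2) =
          (deriv v x - π * v x * cot (π * x)) ^ 2 := by
      rw [cot_eq_cos_div_sin]
      field_simp
      linear_combination -(π * v x) ^ 2 * sin_sq_add_cos_sq (π * x)
    nlinarith [sq_nonneg (deriv v x - π * v x * cot (π * x))]
  have key := intervalIntegral.sub_le_integral_of_hasDeriv_right_of_le zero_le_one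
    (g := fun t => π * (v t ^ 2 * cot (π * t)))
    (continuousOn_const.mul (continuousOn_sq_mul_cot_pi_mul hv hv0 hv1))
    (fun x hx => ((hasDerivAt_sq_mul_cot_pi_mul (hv.differentiable one_ne_zero x)
      (sin_pi_mul_pos hx).ne').const_mul π).hasDerivWithinAt)
    (Continuous.integrableOn_Icc (by fun_prop)) hderiv_le
  simp (disch := exact Continuous.intervalIntegrable (by fun_prop) _ _) only
    [hv0, hv1, intervalIntegral.integral_sub, intervalIntegral.integral_const_mul] at key
  simpa using key

theorem integral_mul_deriv_eq_neg_integral_deriv_mul {u w : ℝ → ℝ} {a b : ℝ}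
    (hu : ContDiff ℝ 1 u) (hw : ContDiff ℝ 1 w) (hua : u a = 0) (hub : u b = 0) :
    ∫ x in a..b, u x * deriv w x = -∫ x in a..b, deriv u x * w x := by
  rw [intervalIntegral.integral_mul_deriv_eq_deriv_mul
    (fun x _ => (hu.differentiable one_ne_zero x).hasDerivAt)
    (fun x _ => (hw.differentiable one_ne_zero x).hasDerivAt)
    ((hu.continuous_deriv le_rfl).intervalIntegrable _ _)
    ((hw.continuous_deriv le_rfl).intervalIntegrable _ _), hua, hub]
  ring

theorem two_mul_mul_integral_mul_le {f g : ℝ → ℝ} {a b : ℝ} (hab : a ≤ b) (hf : Continuous f)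
    (hg : Continuous g) (t : ℝ) :
    2 * t * ∫ x in a..b, f x * g x ≤ (∫ x in a..b, f x ^ 2) + t ^ 2 * ∫ x in a..b, g x ^ 2 := by
  have h : ∫ x in a..b, 2 * t * (f x * g x) ≤ ∫ x in a..b, (f x ^ 2 + t ^ 2 * g x ^ 2) :=
    intervalIntegral.integral_mono_on hab (Continuous.intervalIntegrable (by fun_prop) _ _)
      (Continuous.intervalIntegrable (by fun_prop) _ _)
      fun x _ => by nlinarith [two_mul_le_add_sq (f x) (t * g x)]
  simpa (disch := exact Continuous.intervalIntegrable (by fun_prop) _ _) only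
    [intervalIntegral.integral_add, intervalIntegral.integral_const_mul] using h

theorem integral_mul_add_sq_le {θ K δ : ℝ → ℝ} {a b y : ℝ} (hab : a ≤ b) (hθ : Continuous θ)
    (hK : Continuous K) (hδ : Continuous δ) (hKy : ∀ x ∈ Icc a b, |K x| ≤ |y|) :
    ∫ x in a..b, (θ x * K x + δ x) ^ 2 ≤
      2 * ((∫ x in a..b, θ x ^ 2) * y ^ 2 + ∫ x in a..b, δ x ^ 2) := by
  have h : ∫ x in a..b, (θ x * K x + δ x) ^ 2 ≤
      ∫ x in a..b, (2 * y ^ 2 * θ x ^ 2 + 2 * δ x ^ 2) :=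
    intervalIntegral.integral_mono_on hab (Continuous.intervalIntegrable (by fun_prop) _ _)
      (Continuous.intervalIntegrable (by fun_prop) _ _) fun x hx => by
        have hK2 : K x ^ 2 ≤ y ^ 2 := sq_le_sq.2 (hKy x hx)
        nlinarith [sq_nonneg (θ x * K x - δ x), mul_le_mul_of_nonneg_left hK2 (sq_nonneg (θ x))]
  simp (disch := exact Continuous.intervalIntegrable (by fun_prop) _ _) only
    [intervalIntegral.integral_add, intervalIntegral.integral_const_mul] at h
  linarith

theorem wave_dissipation_eq {c σ a b : ℝ} {v φ G F : ℝ → ℝ} (hc : c ≠ 0) (hσ : σ ≠ 0)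
    (hv : ContDiff ℝ 2 v) (hva : v a = 0) (hvb : v b = 0)
    (hφ : ContDiff ℝ 1 φ) (hφa : φ a = 0) (hφb : φ b = 0) (hG : Continuous G)
    (hF : ∀ x, F x = c ^ 2 * deriv (deriv v) x - σ * φ x + G x) :
    (2 * (c ^ 2 + 1) / σ) * (∫ x in a..b, deriv v x * deriv φ x) +
      (2 / σ) * (∫ x in a..b, φ x * F x) +
      (2 / (σ * c ^ 2)) * ∫ x in a..b, (φ x + σ * v x) * (F x + σ * φ x) =
    -2 * (∫ x in a..b, deriv v x ^ 2) - 2 * (∫ x in a..b, φ x ^ 2) +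
      2 * (c ^ 2 + 1) / (σ * c ^ 2) * (∫ x in a..b, φ x * G x) +
      2 / c ^ 2 * ∫ x in a..b, v x * G x := by
  have hv' : ContDiff ℝ 1 (deriv v) := hv.deriv'
  have hvc := hv.continuous
  have hv'c := hv'.continuous
  have hv''c := hv'.continuous_deriv le_rfl
  have hφc := hφ.continuous
  have hFφ : (fun x => φ x * F x) =
      fun x => c ^ 2 * (φ x * deriv (deriv v) x) - σ * φ x ^ 2 + φ x * G x := by
    ext x; rw [hF]; ring
  have hFv : (fun x => (φ x + σ * v x) * (F x + σ * φ x)) =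
      fun x => c ^ 2 * (φ x * deriv (deriv v) x) + φ x * G x +
        σ * c ^ 2 * (v x * deriv (deriv v) x) + σ * (v x * G x) := by
    ext x; rw [hF]; ring
  have ibpφ := integral_mul_deriv_eq_neg_integral_deriv_mul hφ hv' hφa hφb
  have ibpv := integral_mul_deriv_eq_neg_integral_deriv_mul (hv.of_le one_le_two) hv' hva hvb
  rw [hFφ, hFv]
  simp (disch := exact Continuous.intervalIntegrable (by fun_prop) _ _) only
    [intervalIntegral.integral_add, intervalIntegral.integral_sub,
      intervalIntegral.integral_const_mul, ibpφ, ibpv]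
  simp only [mul_comm (deriv v _), ← sq]
  field_simp
  ring

/-- The dissipation estimate (4.18) for the wave PDE with viscous damping (Case C):
for `c, σ > 0`, `v ∈ C²` and `φ ∈ C¹` vanishing at `0` and `1`, continuous `θ₁, δ` and
continuous `K` with `|K(x)| ≤ |y|` on `[0,1]`, setting
`F = c²v'' − σφ + θ₁K + δ` and
`D = (2(c² + 1)/σ)∫₀¹ v'φ' + (2/σ)∫₀¹ φF + (2/(σc²))∫₀¹ (φ + σv)(F + σφ)`,
one has `D ≤ −(∫₀¹(v')² + ∫₀¹φ²) + 2((c² + 1)²π² + σ²)/(σ²c⁴π²)((∫₀¹θ₁²)y² + ∫₀¹δ²)`. -/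
theorem wave_dissipation_estimate (c σ : ℝ) (hc : 0 < c) (hσ : 0 < σ)
    (v φ θ₁ δ K : ℝ → ℝ) (y : ℝ)
    (hv : ContDiff ℝ 2 v) (hv0 : v 0 = 0) (hv1 : v 1 = 0)
    (hφ : ContDiff ℝ 1 φ) (hφ0 : φ 0 = 0) (hφ1 : φ 1 = 0)
    (hθ₁ : Continuous θ₁) (hδ : Continuous δ) (hK : Continuous K)
    (hKy : ∀ x ∈ Set.Icc (0 : ℝ) 1, |K x| ≤ |y|)
    (F : ℝ → ℝ)
    (hF : ∀ x, F x = c ^ 2 * deriv (deriv v) x - σ * φ x + θ₁ x * K x + δ x)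
    (D : ℝ)
    (hD : D = (2 * (c ^ 2 + 1) / σ) * (∫ x in (0 : ℝ)..1, deriv v x * deriv φ x) +
      (2 / σ) * (∫ x in (0 : ℝ)..1, φ x * F x) +
      (2 / (σ * c ^ 2)) * ∫ x in (0 : ℝ)..1, (φ x + σ * v x) * (F x + σ * φ x)) :
    D ≤ -((∫ x in (0 : ℝ)..1, (deriv v x) ^ 2) + ∫ x in (0 : ℝ)..1, (φ x) ^ 2) +
      2 * ((c ^ 2 + 1) ^ 2 * Real.pi ^ 2 + σ ^ 2) / (σ ^ 2 * c ^ 4 * Real.pi ^ 2) *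
        ((∫ x in (0 : ℝ)..1, (θ₁ x) ^ 2) * y ^ 2 + ∫ x in (0 : ℝ)..1, (δ x) ^ 2) := by
  have hG : Continuous fun x => θ₁ x * K x + δ x := by fun_prop
  rw [hD, wave_dissipation_eq hc.ne' hσ.ne' hv hv0 hv1 hφ hφ0 hφ1 hG fun x => by rw [hF]; ring]
  set β := (c ^ 2 + 1) / (σ * c ^ 2)
  set γ := 1 / (π ^ 2 * c ^ 2)
  have hφG := two_mul_mul_integral_mul_le zero_le_one hφ.continuous hG β
  have hvG := two_mul_mul_integral_mul_le zero_le_one hv.continuous hG γ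
  have hW := pi_sq_mul_integral_sq_le_integral_deriv_sq (hv.of_le one_le_two) hv0 hv1
  have hS := integral_mul_add_sq_le zero_le_one hθ₁ hK hδ hKy
  have hβ : 2 * (c ^ 2 + 1) / (σ * c ^ 2) = 2 * β := by ring
  have hγ : 2 / c ^ 2 = π ^ 2 * (2 * γ) := by simp only [γ]; field_simp
  have hcoef : 2 * ((c ^ 2 + 1) ^ 2 * π ^ 2 + σ ^ 2) / (σ ^ 2 * c ^ 4 * π ^ 2) =
      2 * (β ^ 2 + π ^ 2 * γ ^ 2) := by
    simp only [β, γ]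
    field_simp
  rw [hβ, hγ, hcoef]
  linear_combination hφG + π ^ 2 * hvG + hW + (β ^ 2 + π ^ 2 * γ ^ 2) * hS
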